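/- arXiv:2109.05396 — 3 statements merged into one kernel-verified Lean document; each statement's English description precedes it below -/
import Mathlib

section
/- Let x_1,...,x_n ∈ [0,1] be agent locations, and for each agent let w_i(y) be either |y - x_i| (if the agent dislikes the single facility) or max(x_i, 1 - x_i) (if indifferent). Define ALG as the social welfare Σ_i w_i(y*) where y* = 0 if Σ_i x_i ≥ Σ_i (1-x_i) and y* = 1 otherwise, and OPT = max_{y ∈ [0,1]} Σ_i w_i(y). Then 2·ALG ≥ OPT. -/
/-!
The welfare of each agent is a convex function of the facility location, so the social welfare
`W` is convex and its maximum over `[0, 1]` is `max (W 0) (W 1)`. Moving the facility from `0`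
to `1` raises an agent's welfare by at most `1 - xᵢ` (and lowers it by at most `xᵢ`), while
`W 0 ≥ ∑ xᵢ` and `W 1 ≥ ∑ (1 - xᵢ)`. So if `∑ xᵢ ≥ ∑ (1 - xᵢ)`, then
`W 1 ≤ W 0 + ∑ (1 - xᵢ) ≤ W 0 + ∑ xᵢ ≤ 2 W 0`, and symmetrically otherwise.
-/

open Set Finset

theorem ConvexOn.finset_sum {𝕜 E β ι : Type*} [Semiring 𝕜] [PartialOrder 𝕜]
    [AddCommMonoid E] [AddCommMonoid β] [PartialOrder β] [IsOrderedAddMonoid β]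
    [SMul 𝕜 E] [Module 𝕜 β] {s : Set E} (hs : Convex 𝕜 s) (t : Finset ι)
    {f : ι → E → β} (hf : ∀ i ∈ t, ConvexOn 𝕜 s (f i)) :
    ConvexOn 𝕜 s fun y => ∑ i ∈ t, f i y := by
  classical
  induction t using Finset.induction_on with
  | empty => simpa using convexOn_const (0 : β) hs
  | insert j t hj ih =>
    simp only [Finset.sum_insert hj]
    exact (hf j (mem_insert_self j t)).add (ih fun i hi => hf i (mem_insert_of_mem hi))

noncomputable def agentWelfare (dislikes : Prop) [Decidable dislikes] (x y : ℝ) : ℝ :=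
  if dislikes then |y - x| else max x (1 - x)

section agentWelfare

variable (p : Prop) [Decidable p] {x : ℝ}

theorem convexOn_agentWelfare (x : ℝ) : ConvexOn ℝ univ (agentWelfare p x) := by
  unfold agentWelfare
  split_ifs
  · simpa only [Real.dist_eq] using convexOn_univ_dist x
  · exact convexOn_const _ convex_univ

theorem le_agentWelfare_zero (hx : 0 ≤ x) : x ≤ agentWelfare p x 0 := by
  unfold agentWelfare
  split_ifs
  · rw [zero_sub, abs_neg, abs_of_nonneg hx]
  · exact le_max_left _ _

theorem le_agentWelfare_one (hx : x ≤ 1) : 1 - x ≤ agentWelfare p x 1 := by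
  unfold agentWelfare
  split_ifs
  · rw [abs_of_nonneg (sub_nonneg.2 hx)]
  · exact le_max_right _ _

theorem agentWelfare_one_le (hx : x ∈ Icc (0 : ℝ) 1) :
    agentWelfare p x 1 ≤ agentWelfare p x 0 + (1 - x) := by
  unfold agentWelfare
  split_ifs
  · rw [zero_sub, abs_neg, abs_of_nonneg hx.1, abs_of_nonneg (sub_nonneg.2 hx.2)]
    linarith [hx.1]
  · linarith [hx.2]

theorem agentWelfare_zero_le (hx : x ∈ Icc (0 : ℝ) 1) :
    agentWelfare p x 0 ≤ agentWelfare p x 1 + x := by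
  unfold agentWelfare
  split_ifs
  · rw [zero_sub, abs_neg, abs_of_nonneg hx.1, abs_of_nonneg (sub_nonneg.2 hx.2)]
    linarith [hx.2]
  · linarith [hx.1]

end agentWelfare

theorem stmt3 (n : ℕ) (x : Fin n → ℝ) (hx : ∀ i, x i ∈ Set.Icc (0:ℝ) 1)
    (S : Finset (Fin n))
    (w : Fin n → ℝ → ℝ)
    (hw : w = fun i y => if i ∈ S then |y - x i| else max (x i) (1 - x i))
    (ystar : ℝ)
    (hy : ystar = if (∑ i, x i) ≥ ∑ i, (1 - x i) then 0 else 1) :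
    ∀ y ∈ Set.Icc (0:ℝ) 1, (∑ i, w i y) ≤ 2 * ∑ i, w i ystar := by
  intro y hy01
  set W : ℝ → ℝ := fun y => ∑ i, agentWelfare (i ∈ S) (x i) y
  have hwW : ∀ y, ∑ i, w i y = W y := fun y => by subst hw; rfl
  simp only [hwW]
  have hopt : W y ≤ max (W 0) (W 1) :=
    (ConvexOn.finset_sum convex_univ _ fun i _ => convexOn_agentWelfare _ (x i)).le_max_of_mem_Icc
      (mem_univ 0) (mem_univ 1) hy01
  have hx0 : 0 ≤ ∑ i, x i := sum_nonneg fun i _ => (hx i).1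
  have hx1 : 0 ≤ ∑ i, (1 - x i) := sum_nonneg fun i _ => sub_nonneg.2 (hx i).2
  have hW0 : ∑ i, x i ≤ W 0 := sum_le_sum fun i _ => le_agentWelfare_zero _ (hx i).1
  have hW1 : ∑ i, (1 - x i) ≤ W 1 := sum_le_sum fun i _ => le_agentWelfare_one _ (hx i).2
  have hW10 : W 1 ≤ W 0 + ∑ i, (1 - x i) := by
    rw [← sum_add_distrib]; exact sum_le_sum fun i _ => agentWelfare_one_le _ (hx i)
  have hW01 : W 0 ≤ W 1 + ∑ i, x i := by
    rw [← sum_add_distrib]; exact sum_le_sum fun i _ => agentWelfare_zero_le _ (hx i)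
  refine hopt.trans (max_le ?_ ?_) <;> split_ifs at hy <;> subst hy <;> linarith
end

section
/- Let x_1,...,x_n ∈ [0,1]^2. If q is a corner of the unit square maximizing Σ_i ‖x_i − q‖ over the four corners, then Σ_i ‖x_i − q‖ ≥ n/√2. -/
/-! Every point `x` of the plane satisfies `‖x‖ + ‖x - (1,1)‖ ≥ √2` by the triangle inequality,
so the sums of distances to the opposite corners `(0,0)` and `(1,1)` add up to at least `n √2`;
the larger of the two, and a fortiori the maximum over all corners, is at least `n / √2`. -/

lemma sqrt_sq_add_sq_le_add (p q r : ℝ × ℝ) :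
    √((p.1 - q.1) ^ 2 + (p.2 - q.2) ^ 2) ≤
      √((r.1 - p.1) ^ 2 + (r.2 - p.2) ^ 2) + √((r.1 - q.1) ^ 2 + (r.2 - q.2) ^ 2) := by
  simpa only [Complex.dist_eq_re_im] using
    dist_triangle_left (⟨p.1, p.2⟩ : ℂ) ⟨q.1, q.2⟩ ⟨r.1, r.2⟩

lemma sqrt_two_le_sqrt_add_sqrt (r : ℝ × ℝ) :
    √2 ≤ √((r.1 - 0) ^ 2 + (r.2 - 0) ^ 2) + √((r.1 - 1) ^ 2 + (r.2 - 1) ^ 2) := by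
  simpa [one_add_one_eq_two] using sqrt_sq_add_sq_le_add (0, 0) (1, 1) r

theorem stmt8_general (n : ℕ) (x : Fin n → ℝ × ℝ)
    (dE : ℝ × ℝ → ℝ × ℝ → ℝ)
    (hdE : dE = fun p q => Real.sqrt ((p.1 - q.1)^2 + (p.2 - q.2)^2))
    (corners : Finset (ℝ × ℝ))
    (hcorners : corners = {(0,0), (0,1), (1,0), (1,1)})
    (q : ℝ × ℝ)
    (hmax : ∀ p ∈ corners, ∑ i, dE (x i) p ≤ ∑ i, dE (x i) q) :
    (n : ℝ) / Real.sqrt 2 ≤ ∑ i, dE (x i) q := by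
  subst hdE hcorners
  have h00 := hmax (0, 0) (by simp)
  have h11 := hmax (1, 1) (by simp)
  have hopposite : (n : ℝ) * √2 ≤
      ∑ i, √(((x i).1 - 0) ^ 2 + ((x i).2 - 0) ^ 2) +
        ∑ i, √(((x i).1 - 1) ^ 2 + ((x i).2 - 1) ^ 2) := by
    rw [← Finset.sum_add_distrib]
    simpa using Finset.sum_le_sum fun i (_ : i ∈ Finset.univ) => sqrt_two_le_sqrt_add_sqrt (x i)
  rw [div_le_iff₀ (by positivity)]
  nlinarith [Real.mul_self_sqrt (zero_le_two : (0 : ℝ) ≤ 2), Real.sqrt_nonneg 2]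

theorem stmt8 (n : ℕ) (x : Fin n → ℝ × ℝ)
    (hx : ∀ i, (x i).1 ∈ Set.Icc (0:ℝ) 1 ∧ (x i).2 ∈ Set.Icc (0:ℝ) 1)
    (dE : ℝ × ℝ → ℝ × ℝ → ℝ)
    (hdE : dE = fun p q => Real.sqrt ((p.1 - q.1)^2 + (p.2 - q.2)^2))
    (corners : Finset (ℝ × ℝ))
    (hcorners : corners = {(0,0), (0,1), (1,0), (1,1)})
    (q : ℝ × ℝ) (hq : q ∈ corners)
    (hmax : ∀ p ∈ corners, ∑ i, dE (x i) p ≤ ∑ i, dE (x i) q) :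
    (n : ℝ) / Real.sqrt 2 ≤ ∑ i, dE (x i) q :=
  stmt8_general n x dE hdE corners hcorners q hmax
end

section
/- In the weighted approval voting mechanism, no coalition can strictly benefit all its members by misreporting: let candidates be c_1,...,c_n, voters 1,...,m with weights w_i^+ ≥ w_i^- ≥ 0, true top tiers C_i ⊆ C, and approval A(j) = Σ_i (w_i^+ if c_j ∈ C_i else w_i^-), with winner the candidate maximizing A breaking ties by a fixed linear order. If a coalition U reports top tiers C'_i instead, yielding winner c_ℓ while the truthful winner is c_k, and every voter i in U strictly prefers c_ℓ to c_k (i.e., c_ℓ ∈ C_i and c_k ∉ C_i for all i ∈ U), then a contradiction arises: c_ℓ would not win. Formally: if c_k ∈ ∩_{i∈U} (C \ C_i) and c_ℓ ∈ ∩_{i∈U} C_i, and c_k wins under truthful reports, then c_ℓ does not win when only coalition U changes its reports. -/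
/-! Misreporting by `U` can only lower the approval of `l`, which every member of `U` already
approves, and only raise that of `k`, which none of them approves; so `l` cannot overtake `k`. -/

def IsWinner {α β γ : Type*} [LT β] [LT γ] (A : α → β) (prio : α → γ) (k : α) : Prop :=
  ∀ j, j ≠ k → A j < A k ∨ (A j = A k ∧ prio k < prio j)

theorem IsWinner.eq_of_le_of_le {α β γ : Type*} [Preorder β] [Preorder γ]
    {A A' : α → β} {prio : α → γ} {k l : α}
    (hk : IsWinner A prio k) (hl : IsWinner A' prio l) (hAl : A' l ≤ A l) (hAk : A k ≤ A' k) :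
    l = k := by
  by_contra hlk
  rcases hk l hlk with hlt | ⟨heq, hkl⟩ <;> rcases hl k (Ne.symm hlk) with hlt' | ⟨heq', hlk'⟩
  · exact lt_irrefl _ (((hAl.trans_lt hlt).trans_le hAk).trans hlt')
  · exact lt_irrefl _ (((hAl.trans_lt hlt).trans_le hAk).trans_eq heq')
  · exact lt_irrefl _ (((hAl.trans heq.le).trans hAk).trans_lt hlt')
  · exact lt_asymm hkl hlk'

section Approval

variable {ι α M : Type*} [Fintype ι] [DecidableEq α] [AddCommMonoid M] [PartialOrder M]
  [IsOrderedAddMonoid M] {wp wm : ι → M} {C C' : ι → Finset α} {j : α}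

theorem approval_le_of_forall_eq_or_mem (hw : ∀ i, wm i ≤ wp i)
    (h : ∀ i, C' i = C i ∨ j ∈ C i) :
    ∑ i, (if j ∈ C' i then wp i else wm i) ≤ ∑ i, (if j ∈ C i then wp i else wm i) := by
  refine Finset.sum_le_sum fun i _ => ?_
  rcases h i with hC | hj
  · rw [hC]
  · rw [if_pos hj]
    split_ifs
    exacts [le_rfl, hw i]

theorem le_approval_of_forall_eq_or_not_mem (hw : ∀ i, wm i ≤ wp i)
    (h : ∀ i, C' i = C i ∨ j ∉ C i) :
    ∑ i, (if j ∈ C i then wp i else wm i) ≤ ∑ i, (if j ∈ C' i then wp i else wm i) := by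
  refine Finset.sum_le_sum fun i _ => ?_
  rcases h i with hC | hj
  · rw [hC]
  · rw [if_neg hj]
    split_ifs
    exacts [hw i, le_rfl]

end Approval

theorem stmt15_general (m n : ℕ) (wp wm : Fin m → ℝ)
    (hw : ∀ i, 0 ≤ wm i ∧ wm i ≤ wp i)
    (C C' : Fin m → Finset (Fin n))
    (prio : Fin n → ℕ)
    (U : Finset (Fin m)) (hU : U.Nonempty)
    (hout : ∀ i ∉ U, C' i = C i)
    (A A' : Fin n → ℝ)
    (hA : A = fun j => ∑ i, if j ∈ C i then wp i else wm i)
    (hA' : A' = fun j => ∑ i, if j ∈ C' i then wp i else wm i)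
    (k l : Fin n)
    (hkwin : ∀ j, j ≠ k → A j < A k ∨ (A j = A k ∧ prio k < prio j))
    (hkC : ∀ i ∈ U, k ∉ C i) (hlC : ∀ i ∈ U, l ∈ C i) :
    ¬ (∀ j, j ≠ l → A' j < A' l ∨ (A' j = A' l ∧ prio l < prio j)) := by
  intro hlwin
  have hw' : ∀ i, wm i ≤ wp i := fun i => (hw i).2
  have hl_ne_k : l ≠ k := by
    rintro rfl
    obtain ⟨i, hi⟩ := hU
    exact hkC i hi (hlC i hi)
  have hAl : A' l ≤ A l := by
    subst hA hA'
    refine approval_le_of_forall_eq_or_mem hw' fun i => ?_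
    by_cases hi : i ∈ U
    exacts [Or.inr (hlC i hi), Or.inl (hout i hi)]
  have hAk : A k ≤ A' k := by
    subst hA hA'
    refine le_approval_of_forall_eq_or_not_mem hw' fun i => ?_
    by_cases hi : i ∈ U
    exacts [Or.inr (hkC i hi), Or.inl (hout i hi)]
  exact hl_ne_k (IsWinner.eq_of_le_of_le hkwin hlwin hAl hAk)

theorem stmt15 (m n : ℕ) (wp wm : Fin m → ℝ)
    (hw : ∀ i, 0 ≤ wm i ∧ wm i ≤ wp i)
    (C C' : Fin m → Finset (Fin n))
    (prio : Fin n → ℕ) (hprio : Function.Injective prio)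
    (U : Finset (Fin m)) (hU : U.Nonempty)
    (hout : ∀ i ∉ U, C' i = C i)
    (A A' : Fin n → ℝ)
    (hA : A = fun j => ∑ i, if j ∈ C i then wp i else wm i)
    (hA' : A' = fun j => ∑ i, if j ∈ C' i then wp i else wm i)
    (k l : Fin n)
    (hkwin : ∀ j, j ≠ k → A j < A k ∨ (A j = A k ∧ prio k < prio j))
    (hkC : ∀ i ∈ U, k ∉ C i) (hlC : ∀ i ∈ U, l ∈ C i) :
    ¬ (∀ j, j ≠ l → A' j < A' l ∨ (A' j = A' l ∧ prio l < prio j)) :=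
  stmt15_general m n wp wm hw C C' prio U hU hout A A' hA hA' k l hkwin hkC hlC
end
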